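/- Let s, n ≥ 1, let Γ be a real s×s matrix such that λ_min((Γ + Γᵀ)/2) < 0, let M be a real symmetric positive definite n×n matrix, let A be a real symmetric positive semidefinite n×n matrix, let P be a real symmetric positive definite n×n matrix, and let Δt ≥ 0 satisfy λ_min(P^{-1/2} M P^{-1/2}) + Δt · λ_min((Γ + Γᵀ)/2) · λ_max(P^{-1/2} A P^{-1/2}) > 0. Set 𝔹 = (I_s ⊗ P^{-1/2})(I_s ⊗ M + Δt·(Γ ⊗ A))(I_s ⊗ P^{-1/2}). Then the symmetric part (𝔹 + 𝔹ᵀ)/2 is positive definite and κ̃(𝔹) ≤ (λ_max(P^{-1/2} M P^{-1/2}) + Δt · σ_max(Γ) · λ_max(P^{-1/2} A P^{-1/2})) / (λ_min(P^{-1/2} M P^{-1/2}) + Δt · λ_min((Γ + Γᵀ)/2) · λ_max(P^{-1/2} A P^{-1/2})). -/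

import Mathlib

open Matrix Kronecker

/-- The smallest eigenvalue of a (symmetric) real matrix, as the infimum of its spectrum. -/
noncomputable def lamMin {m : Type*} [Fintype m] [DecidableEq m] (A : Matrix m m ℝ) : ℝ :=
  sInf (spectrum ℝ A)

/-- The largest eigenvalue of a (symmetric) real matrix, as the supremum of its spectrum. -/
noncomputable def lamMax {m : Type*} [Fintype m] [DecidableEq m] (A : Matrix m m ℝ) : ℝ :=
  sSup (spectrum ℝ A)

/-- The largest singular value of a real square matrix. -/
noncomputable def sigmaMax {m : Type*} [Fintype m] [DecidableEq m] (B : Matrix m m ℝ) : ℝ :=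
  Real.sqrt (lamMax (Bᵀ * B))

/-- `P^{-1/2}`: the inverse of the unique symmetric positive definite square root of `P`. -/
noncomputable def Matrix.PosDef.invSqrt {m : Type*} [Fintype m] [DecidableEq m]
    {P : Matrix m m ℝ} (hP : P.PosDef) : Matrix m m ℝ :=
  (hP.isHermitian.eigenvectorUnitary.1 *
    diagonal (Real.sqrt ∘ hP.isHermitian.eigenvalues) *
    (star hP.isHermitian.eigenvectorUnitary : Matrix m m ℝ))⁻¹

/-- The modified condition number `κ̃(B) = σ_max(B) / λ_min((B + Bᵀ)/2)`. -/
noncomputable def ktilde {m : Type*} [Fintype m] [DecidableEq m] (B : Matrix m m ℝ) : ℝ :=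
  sigmaMax B / lamMin ((1 / 2 : ℝ) • (B + Bᵀ))


/-!
After the congruence by `I ⊗ P^{-1/2}`, `𝔹 = I ⊗ M̃ + Δt • (Γ ⊗ Ã)` with `M̃ = P^{-1/2} M P^{-1/2}`
and `Ã = P^{-1/2} A P^{-1/2}` positive semidefinite. In the Loewner order its symmetric part
`I ⊗ M̃ + Δt • (Γₛ ⊗ Ã)` dominates `(λ_min M̃ + Δt λ_min Γₛ λ_max Ã) • I`, since
`Γₛ ⊗ Ã ≥ λ_min Γₛ • (I ⊗ Ã) ≥ λ_min Γₛ λ_max Ã • I` when `λ_min Γₛ ≤ 0`.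
For the numerator, `σ_max` is the `ℓ²` operator norm: it is subadditive, submultiplicative
under `⊗`, and equals `λ_max` on positive semidefinite matrices.
-/

open scoped MatrixOrder Matrix.Norms.L2Operator ComplexOrder

namespace Matrix

section Ring

variable {R l m : Type*} [CommRing R]

theorem sub_kronecker (A B : Matrix l l R) (C : Matrix m m R) :
    (A - B) ⊗ₖ C = A ⊗ₖ C - B ⊗ₖ C := by
  ext; simp [sub_mul]

theorem kronecker_sub (A : Matrix l l R) (B C : Matrix m m R) :
    A ⊗ₖ (B - C) = A ⊗ₖ B - A ⊗ₖ C := by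
  ext; simp [mul_sub]

theorem one_kronecker_mul_kronecker_mul_one_kronecker [Fintype l] [Fintype m] [DecidableEq l]
    (P Q Y : Matrix m m R) (X : Matrix l l R) :
    (1 ⊗ₖ P) * (X ⊗ₖ Y) * (1 ⊗ₖ Q) = X ⊗ₖ (P * Y * Q) := by
  rw [← mul_kronecker_mul, ← mul_kronecker_mul, one_mul, mul_one]

end Ring

section Order

variable {𝕜 l m : Type*} [RCLike 𝕜]

theorem kronecker_le_kronecker_of_nonneg_right [Fintype l] [Fintype m]
    {A B : Matrix l l 𝕜} {C : Matrix m m 𝕜} (h : A ≤ B) (hC : 0 ≤ C) : A ⊗ₖ C ≤ B ⊗ₖ C := by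
  rw [le_iff, ← sub_kronecker]
  exact (le_iff.mp h).kronecker hC.posSemidef

theorem kronecker_le_kronecker_of_nonneg_left [Fintype l] [Fintype m]
    {A : Matrix l l 𝕜} {B C : Matrix m m 𝕜} (h : B ≤ C) (hA : 0 ≤ A) : A ⊗ₖ B ≤ A ⊗ₖ C := by
  rw [le_iff, ← kronecker_sub]
  exact hA.posSemidef.kronecker (le_iff.mp h)

theorem PosDef.of_smul_one_le [DecidableEq m] {S : Matrix m m 𝕜} {c : ℝ} (hc : 0 < c)
    (h : c • 1 ≤ S) : S.PosDef := by
  simpa using (PosDef.one.smul hc).add_posSemidef (le_iff.mp h)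

end Order

theorem isHermitian_smul_add_transpose {m : Type*} (c : ℝ) (B : Matrix m m ℝ) :
    (c • (B + Bᵀ)).IsHermitian :=
  conjTranspose_eq_transpose_of_trivial B ▸
    (isHermitian_add_transpose_self B).smul (IsSelfAdjoint.all c)

theorem PosDef.isHermitian_invSqrt {m : Type*} [Fintype m] [DecidableEq m]
    {P : Matrix m m ℝ} (hP : P.PosDef) : hP.invSqrt.IsHermitian := by
  rw [invSqrt, star_eq_conjTranspose]
  exact (isHermitian_mul_mul_conjTranspose _ (isHermitian_diagonal _)).inv

section L2OpNorm

variable {m n : Type*} [Fintype m] [Fintype n] [DecidableEq m] [DecidableEq n]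

theorem le_norm_smul_one {S : Matrix m m ℝ} (hS : S.IsHermitian) : S ≤ ‖S‖ • 1 := by
  rw [← Algebra.algebraMap_eq_smul_one, le_algebraMap_iff_spectrum_le hS.isSelfAdjoint]
  exact fun x hx => (Real.le_norm_self x).trans
    (IsometricContinuousFunctionalCalculus.norm_spectrum_le S hx hS.isSelfAdjoint)

theorem conjTranspose_mul_self_le_norm_sq_smul_one (C : Matrix m m ℝ) :
    Cᴴ * C ≤ ‖C‖ ^ 2 • 1 := by
  have := le_norm_smul_one (isHermitian_conjTranspose_mul_self C)
  rwa [l2_opNorm_conjTranspose_mul_self, ← sq] at this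

theorem norm_le_of_le_smul_one {S : Matrix m m ℝ} (hS : 0 ≤ S) {r : ℝ} (hr : 0 ≤ r)
    (h : S ≤ r • 1) : ‖S‖ ≤ r := by
  rcases isEmpty_or_nonempty m with _ | _
  · simpa [Subsingleton.elim S 0] using hr
  have hsa : IsSelfAdjoint S := hS.posSemidef.isHermitian.isSelfAdjoint
  obtain ⟨⟨x, hx, hxS⟩, -⟩ :=
    IsometricContinuousFunctionalCalculus.isGreatest_norm_spectrum (𝕜 := ℝ) S hsa
  rw [← Algebra.algebraMap_eq_smul_one, le_algebraMap_iff_spectrum_le hsa] at h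
  dsimp only at hxS
  rw [← hxS, Real.norm_of_nonneg (spectrum_nonneg_of_nonneg hS hx)]
  exact h x hx

theorem norm_kronecker_le (C : Matrix m m ℝ) (D : Matrix n n ℝ) :
    ‖C ⊗ₖ D‖ ≤ ‖C‖ * ‖D‖ := by
  have hCD : (C ⊗ₖ D)ᴴ * (C ⊗ₖ D) ≤ ((‖C‖ * ‖D‖) ^ 2 : ℝ) • 1 := calc
    (C ⊗ₖ D)ᴴ * (C ⊗ₖ D) = (Cᴴ * C) ⊗ₖ (Dᴴ * D) := by
      rw [conjTranspose_kronecker, mul_kronecker_mul]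
    _ ≤ (‖C‖ ^ 2 • 1 : Matrix m m ℝ) ⊗ₖ (Dᴴ * D) :=
      kronecker_le_kronecker_of_nonneg_right (conjTranspose_mul_self_le_norm_sq_smul_one C)
        (posSemidef_conjTranspose_mul_self D).nonneg
    _ ≤ (‖C‖ ^ 2 • 1 : Matrix m m ℝ) ⊗ₖ (‖D‖ ^ 2 • 1 : Matrix n n ℝ) :=
      kronecker_le_kronecker_of_nonneg_left (conjTranspose_mul_self_le_norm_sq_smul_one D)
        (PosSemidef.one.smul (sq_nonneg _)).nonneg
    _ = ((‖C‖ * ‖D‖) ^ 2 : ℝ) • 1 := by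
      rw [smul_kronecker, kronecker_smul, one_kronecker_one, smul_smul, mul_pow]
  have := norm_le_of_le_smul_one (posSemidef_conjTranspose_mul_self _).nonneg (sq_nonneg _) hCD
  rw [l2_opNorm_conjTranspose_mul_self, ← sq] at this
  exact (abs_le_of_sq_le_sq' this (by positivity)).2

end L2OpNorm

end Matrix

section Spectrum

variable {m : Type*} [Fintype m] [DecidableEq m] {S : Matrix m m ℝ}

theorem lamMin_smul_one_le (hS : S.IsHermitian) : lamMin S • 1 ≤ S := by
  rw [← Algebra.algebraMap_eq_smul_one, algebraMap_le_iff_le_spectrum hS.isSelfAdjoint]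
  exact fun _ hx =>
    csInf_le (hS.spectrum_real_eq_range_eigenvalues ▸ (Set.finite_range _).bddBelow) hx

theorem le_lamMax_smul_one (hS : S.IsHermitian) : S ≤ lamMax S • 1 := by
  rw [← Algebra.algebraMap_eq_smul_one, le_algebraMap_iff_spectrum_le hS.isSelfAdjoint]
  exact fun _ hx =>
    le_csSup (hS.spectrum_real_eq_range_eigenvalues ▸ (Set.finite_range _).bddAbove) hx

theorem le_lamMin_of_smul_one_le [Nonempty m] (hS : S.IsHermitian) {c : ℝ} (h : c • 1 ≤ S) :
    c ≤ lamMin S := by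
  rw [← Algebra.algebraMap_eq_smul_one, algebraMap_le_iff_le_spectrum hS.isSelfAdjoint] at h
  exact le_csInf (hS.spectrum_real_eq_range_eigenvalues ▸ Set.range_nonempty _) h

theorem lamMax_eq_norm [Nonempty m] (hS : S.PosSemidef) : lamMax S = ‖S‖ := by
  have hsa : IsSelfAdjoint S := hS.isHermitian.isSelfAdjoint
  obtain ⟨⟨x, hx, hxS⟩, -⟩ :=
    IsometricContinuousFunctionalCalculus.isGreatest_norm_spectrum (𝕜 := ℝ) S hsa
  dsimp only at hxS
  refine IsGreatest.csSup_eq ⟨?_, fun y hy => ?_⟩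
  · rwa [← hxS, Real.norm_of_nonneg (spectrum_nonneg_of_nonneg hS.nonneg hx)]
  · exact (Real.le_norm_self y).trans
      (IsometricContinuousFunctionalCalculus.norm_spectrum_le S hy hsa)

theorem sigmaMax_eq_norm [Nonempty m] (B : Matrix m m ℝ) : sigmaMax B = ‖B‖ := by
  rw [sigmaMax, ← conjTranspose_eq_transpose_of_trivial,
    lamMax_eq_norm (posSemidef_conjTranspose_mul_self B), l2_opNorm_conjTranspose_mul_self,
    Real.sqrt_mul_self (norm_nonneg _)]

end Spectrum

theorem symmPart_one_kronecker_add_smul_kronecker {s n : Type*} [DecidableEq s]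
    {M A : Matrix n n ℝ} (hM : M.IsSymm) (hA : A.IsSymm) (Γ : Matrix s s ℝ) (Δt : ℝ) :
    (1 / 2 : ℝ) • (1 ⊗ₖ M + Δt • (Γ ⊗ₖ A) + (1 ⊗ₖ M + Δt • (Γ ⊗ₖ A))ᵀ) =
      1 ⊗ₖ M + Δt • (((1 / 2 : ℝ) • (Γ + Γᵀ)) ⊗ₖ A) := by
  rw [transpose_add, transpose_smul, ← kroneckerMap_transpose, ← kroneckerMap_transpose,
    transpose_one, hM.eq, hA.eq, smul_kronecker, add_kronecker]
  module

section KroneckerSum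

variable {s n : Type*} [Fintype s] [Fintype n] [DecidableEq s] [DecidableEq n]

theorem smul_one_le_one_kronecker_add_smul_kronecker {M A : Matrix n n ℝ} {G : Matrix s s ℝ}
    (hM : M.IsHermitian) (hA : A.PosSemidef) (hG : G.IsHermitian) (hG₀ : lamMin G ≤ 0)
    {Δt : ℝ} (hΔt : 0 ≤ Δt) :
    (lamMin M + Δt * lamMin G * lamMax A) • 1 ≤ 1 ⊗ₖ M + Δt • (G ⊗ₖ A) := by
  have hMgap := (PosSemidef.one (n := s)).kronecker (le_iff.mp (lamMin_smul_one_le hM))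
  have hGgap := (le_iff.mp (lamMin_smul_one_le hG)).kronecker hA
  have hAgap := ((PosSemidef.one (n := s)).kronecker
    (le_iff.mp (le_lamMax_smul_one hA.isHermitian))).smul (neg_nonneg.mpr hG₀)
  rw [le_iff]
  convert hMgap.add ((hGgap.add hAgap).smul hΔt) using 1
  simp only [kronecker_sub, sub_kronecker, kronecker_smul, smul_kronecker, one_kronecker_one]
  module

theorem sigmaMax_one_kronecker_add_smul_kronecker_le [Nonempty s] [Nonempty n]
    {M A : Matrix n n ℝ} (hM : M.PosSemidef) (hA : A.PosSemidef) (Γ : Matrix s s ℝ) {Δt : ℝ}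
    (hΔt : 0 ≤ Δt) :
    sigmaMax (1 ⊗ₖ M + Δt • (Γ ⊗ₖ A)) ≤ lamMax M + Δt * sigmaMax Γ * lamMax A := by
  rw [sigmaMax_eq_norm, sigmaMax_eq_norm, lamMax_eq_norm hM, lamMax_eq_norm hA]
  calc ‖1 ⊗ₖ M + Δt • (Γ ⊗ₖ A)‖ ≤ ‖(1 : Matrix s s ℝ) ⊗ₖ M‖ + ‖Δt • (Γ ⊗ₖ A)‖ :=
        norm_add_le _ _
    _ ≤ ‖(1 : Matrix s s ℝ)‖ * ‖M‖ + Δt * (‖Γ‖ * ‖A‖) := by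
        rw [norm_smul, Real.norm_of_nonneg hΔt]
        gcongr <;> exact norm_kronecker_le _ _
    _ = ‖M‖ + Δt * ‖Γ‖ * ‖A‖ := by rw [norm_one]; ring

end KroneckerSum

theorem stmt4 (s n : ℕ) (hs : 1 ≤ s) (hn : 1 ≤ n)
    (Γ : Matrix (Fin s) (Fin s) ℝ) (hΓ : lamMin ((1 / 2 : ℝ) • (Γ + Γᵀ)) < 0)
    (M A P : Matrix (Fin n) (Fin n) ℝ)
    (hM : M.PosDef) (hA : A.PosSemidef) (hP : P.PosDef)
    (Δt : ℝ) (hΔt : 0 ≤ Δt)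
    (hdt : 0 < lamMin (hP.invSqrt * M * hP.invSqrt)
        + Δt * lamMin ((1 / 2 : ℝ) • (Γ + Γᵀ)) * lamMax (hP.invSqrt * A * hP.invSqrt))
    (B : Matrix (Fin s × Fin n) (Fin s × Fin n) ℝ)
    (hB : B = ((1 : Matrix (Fin s) (Fin s) ℝ) ⊗ₖ hP.invSqrt) *
        ((1 : Matrix (Fin s) (Fin s) ℝ) ⊗ₖ M + Δt • (Γ ⊗ₖ A)) *
        ((1 : Matrix (Fin s) (Fin s) ℝ) ⊗ₖ hP.invSqrt)) :
    ((1 / 2 : ℝ) • (B + Bᵀ)).PosDef ∧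
    ktilde B ≤
      (lamMax (hP.invSqrt * M * hP.invSqrt)
          + Δt * sigmaMax Γ * lamMax (hP.invSqrt * A * hP.invSqrt)) /
      (lamMin (hP.invSqrt * M * hP.invSqrt)
          + Δt * lamMin ((1 / 2 : ℝ) • (Γ + Γᵀ)) * lamMax (hP.invSqrt * A * hP.invSqrt)) := by
  have : Nonempty (Fin s) := ⟨⟨0, hs⟩⟩
  have : Nonempty (Fin n) := ⟨⟨0, hn⟩⟩
  set Q := hP.invSqrt
  have hQ : Qᴴ = Q := hP.isHermitian_invSqrt
  have hQMQ : (Q * M * Q).PosSemidef := by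
    simpa only [hQ] using hM.posSemidef.conjTranspose_mul_mul_same Q
  have hQAQ : (Q * A * Q).PosSemidef := by
    simpa only [hQ] using hA.conjTranspose_mul_mul_same Q
  replace hB : B = 1 ⊗ₖ (Q * M * Q) + Δt • (Γ ⊗ₖ (Q * A * Q)) := by
    rw [hB, mul_add, add_mul, mul_smul_comm, smul_mul_assoc,
      one_kronecker_mul_kronecker_mul_one_kronecker, one_kronecker_mul_kronecker_mul_one_kronecker]
  have hlower := smul_one_le_one_kronecker_add_smul_kronecker hQMQ.isHermitian hQAQ
    (isHermitian_smul_add_transpose (1 / 2) Γ) hΓ.le hΔt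
  rw [← symmPart_one_kronecker_add_smul_kronecker (isHermitian_iff_isSymm.mp hQMQ.isHermitian)
    (isHermitian_iff_isSymm.mp hQAQ.isHermitian), ← hB] at hlower
  have hupper := hB ▸ sigmaMax_one_kronecker_add_smul_kronecker_le hQMQ hQAQ Γ hΔt
  exact ⟨PosDef.of_smul_one_le hdt hlower,
    div_le_div₀ ((Real.sqrt_nonneg _).trans hupper) hupper hdt
      (le_lamMin_of_smul_one_le (isHermitian_smul_add_transpose _ B) hlower)⟩
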